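/- arXiv:0905.1679 — 3 statements merged into one kernel-verified Lean document; each statement's English description precedes it below -/
import Mathlib

section
/- Let G be a finite connected weighted graph such that the edge lengths within each maximal 2-connected component of G are linearly independent over ℚ. Then J(G) is a free abelian group of rank #V(G) − #Br(G) − 1, where Br(G) is the set of bridges of G. -/
/-! An integral exact chain `α = df` telescopes to zero around every circuit, so along a
circuit through a non-bridge `e` the edge lengths satisfy an integral relation in which `ℓ(e)`
has coefficient `±α(e)`; by the independence hypothesis, `α` vanishes off the bridges.
Conversely, a chain supported on bridges is exact: its potential jumps by `α(b) ℓ(b)` across each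
bridge `b`. Hence `H₁(G, ℤ) ⊕ im(d)_ℤ` is the kernel of `α ↦ d*(α with its bridge coefficients
set to zero)`, whose image consists of the degree-zero divisors with zero flux across every
bridge (the flux across `b` being the sum over the side of its head, which picks out the
coefficient of `b` in `d*`). This image is the kernel of a surjection `ℤ^V → ℤ^Br × ℤ`: a free
group of rank `#V - #Br - 1`. -/

/-- A finite weighted (multi)graph with a fixed orientation of the edges:
vertex type `V`, edge type `E`, tail/head maps and a positive length function. -/
structure WGraph where
  V : Type
  E : Type
  [fV : Fintype V]
  [fE : Fintype E]
  [dV : DecidableEq V]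
  [dE : DecidableEq E]
  tail : E → V
  head : E → V
  len : E → ℝ
  len_pos : ∀ e, 0 < len e

attribute [instance] WGraph.fV WGraph.fE WGraph.dV WGraph.dE

namespace WGraph

variable (G : WGraph)

/-- Two vertices are adjacent if some edge joins them (in either direction). -/
def Adj (x y : G.V) : Prop :=
  ∃ e, (G.tail e = x ∧ G.head e = y) ∨ (G.tail e = y ∧ G.head e = x)

/-- A weighted graph is connected if any two vertices are joined by a walk. -/
def Connected : Prop := ∀ x y : G.V, Relation.ReflTransGen G.Adj x y

/-- The differential `d : C_0(G,ℝ) → C_1(G,ℝ)`, `(df)(e) = (f(e⁺) - f(e⁻))/ℓ(e)`. -/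
noncomputable def d (f : G.V → ℝ) : G.E → ℝ :=
  fun e => (f (G.head e) - f (G.tail e)) / G.len e

/-- The adjoint `d* : C_1(G,ℝ) → C_0(G,ℝ)`,
`(d*α)(x) = Σ_{e⁺ = x} α(e) - Σ_{e⁻ = x} α(e)`. -/
def dStar (α : G.E → ℝ) : G.V → ℝ := fun x =>
  (∑ e ∈ Finset.univ.filter fun e => G.head e = x, α e) -
    ∑ e ∈ Finset.univ.filter fun e => G.tail e = x, α e

/-- The inner product `⟨α,β⟩ = Σ_e α(e) β(e) ℓ(e)` on real 1-chains. -/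
noncomputable def ip (α β : G.E → ℝ) : ℝ := ∑ e, α e * β e * G.len e

/-- Real 1-cycles: the kernel of `d*`. -/
def IsCycle (α : G.E → ℝ) : Prop := ∀ x, G.dStar α x = 0

/-- Exact 1-chains: the image of `d`. -/
def IsExact (α : G.E → ℝ) : Prop := ∃ f : G.V → ℝ, α = G.d f

/-- A 1-form `ω = Σ ω_e de` (recorded by its coefficients) is harmonic if at every
vertex the incoming and outgoing coefficients sum to the same value. -/
def Harmonic (ω : G.E → ℝ) : Prop :=
  ∀ x, (∑ e ∈ Finset.univ.filter fun e => G.head e = x, ω e) =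
    ∑ e ∈ Finset.univ.filter fun e => G.tail e = x, ω e

/-- Integration of the 1-form `ω` along the 1-chain `α`: `∫_α ω = Σ_e ω_e α(e) ℓ(e)`. -/
noncomputable def intPair (ω α : G.E → ℝ) : ℝ := ∑ e, ω e * α e * G.len e

/-- `d*` on integral 1-chains. -/
def dStarZ (α : G.E → ℤ) : G.V → ℤ := fun x =>
  (∑ e ∈ Finset.univ.filter fun e => G.head e = x, α e) -
    ∑ e ∈ Finset.univ.filter fun e => G.tail e = x, α e

/-- Integral 1-cycles. -/
def IsCycleZ (α : G.E → ℤ) : Prop := ∀ x, G.dStarZ α x = 0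

/-- `α ∈ im(d)_ℤ`: `α` is an integral 1-chain which is the differential of a real
function on the vertices (a function with integer slopes). -/
def IsExactZ (α : G.E → ℤ) : Prop :=
  ∃ f : G.V → ℝ, ∀ e, (α e : ℝ) = G.d f e

/-- The subgroup `H_1(G,ℤ) ⊕ im(d)_ℤ` of `C_1(G,ℤ)`, i.e. the subgroup generated by
integral cycles together with integral exact chains. -/
def jacRel : AddSubgroup (G.E → ℤ) :=
  AddSubgroup.closure {α | G.IsCycleZ α ∨ G.IsExactZ α}

/-- The Jacobian group of a weighted graph: `J(G) = C_1(G,ℤ)/(H_1(G,ℤ) ⊕ im(d)_ℤ)`. -/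
def Jac := (G.E → ℤ) ⧸ G.jacRel

noncomputable instance : AddCommGroup G.Jac :=
  inferInstanceAs (AddCommGroup ((G.E → ℤ) ⧸ G.jacRel))

/-- Divisors of degree zero. -/
def Div0 : AddSubgroup (G.V → ℤ) where
  carrier := {D | ∑ x, D x = 0}
  add_mem' := by
    intro a b ha hb
    simp only [Set.mem_setOf_eq] at *
    simp [Finset.sum_add_distrib, ha, hb]
  zero_mem' := by simp
  neg_mem' := by
    intro a ha
    simp only [Set.mem_setOf_eq] at *
    simp [ha]

/-- `d*` as a group homomorphism on integral 1-chains. -/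
def dStarZHom : (G.E → ℤ) →+ (G.V → ℤ) where
  toFun := G.dStarZ
  map_zero' := by funext x; simp [dStarZ]
  map_add' := by
    intro a b
    funext x
    simp [dStarZ, Finset.sum_add_distrib]
    ring

/-- The subgroup `im(d)_ℤ` of `C_1(G,ℤ)`. -/
def imdZ : AddSubgroup (G.E → ℤ) where
  carrier := {α | G.IsExactZ α}
  add_mem' := by
    rintro a b ⟨f, hf⟩ ⟨g, hg⟩
    exact ⟨f + g, fun e => by
      simp only [Pi.add_apply, Int.cast_add, hf e, hg e, d]; ring⟩
  zero_mem' := ⟨0, fun e => by simp [d]⟩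
  neg_mem' := by
    rintro a ⟨f, hf⟩
    exact ⟨-f, fun e => by
      simp only [Pi.neg_apply, Int.cast_neg, hf e, d]; ring⟩

/-- Principal divisors: `Prin(G) = d*(im(d)_ℤ)`. -/
def Prin : AddSubgroup (G.V → ℤ) := G.imdZ.map G.dStarZHom

lemma sum_dStarZ (α : G.E → ℤ) : ∑ x, G.dStarZ α x = 0 := by
  simp only [dStarZ, Finset.sum_sub_distrib]
  rw [Finset.sum_fiberwise, Finset.sum_fiberwise]
  simp

/-- The degree-zero Picard group `Pic(G) = Div⁰(G)/Prin(G)`. -/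
def PicZ := G.Div0 ⧸ (G.Prin.addSubgroupOf G.Div0)

noncomputable instance : AddCommGroup G.PicZ :=
  inferInstanceAs (AddCommGroup (G.Div0 ⧸ (G.Prin.addSubgroupOf G.Div0)))

/-- The weighted graph obtained by deleting the edge `e₀`. -/
def delEdge (e₀ : G.E) : WGraph where
  V := G.V
  E := {e : G.E // e ≠ e₀}
  tail := fun e => G.tail e.1
  head := fun e => G.head e.1
  len := fun e => G.len e.1
  len_pos := fun e => G.len_pos e.1

/-- An edge is a bridge if deleting it disconnects the graph. -/
def IsBridge (e₀ : G.E) : Prop := ¬ (G.delEdge e₀).Connected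

/-- The weighted graph obtained by deleting a vertex `z` (and all incident edges). -/
def delVertex (z : G.V) : WGraph where
  V := {x : G.V // x ≠ z}
  E := {e : G.E // G.tail e ≠ z ∧ G.head e ≠ z}
  tail := fun e => ⟨G.tail e.1, e.2.1⟩
  head := fun e => ⟨G.head e.1, e.2.2⟩
  len := fun e => G.len e.1
  len_pos := fun e => G.len_pos e.1

open scoped Classical in
/-- The (discrete) potential kernel: `jKer z y` is the function `f` with `f(z) = 0`
and `Δf = δ_y - δ_z` (when such a function exists; it is unique on a
connected graph). -/
noncomputable def jKer (z y : G.V) : G.V → ℝ :=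
  if h : ∃ f : G.V → ℝ, f z = 0 ∧ ∀ w, G.dStar (G.d f) w =
      (if w = y then 1 else 0) - (if w = z then 1 else 0)
  then h.choose else 0

/-- Connectivity using only the edges in `S`. -/
def ConnectedOn (S : Finset G.E) : Prop :=
  ∀ x y : G.V, Relation.ReflTransGen
    (fun a b => ∃ e ∈ S, (G.tail e = a ∧ G.head e = b) ∨ (G.tail e = b ∧ G.head e = a)) x y

/-- A spanning tree: a spanning connected edge set with `#V - 1` edges. -/
def IsSpanningTree (T : Finset G.E) : Prop :=
  G.ConnectedOn T ∧ T.card + 1 = Fintype.card G.V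

/-- The weight `w(T) = Π_{e ∉ T} ℓ(e)` of a spanning tree. -/
noncomputable def wt (T : Finset G.E) : ℝ := ∏ e ∈ Finset.univ \ T, G.len e

open scoped Classical in
/-- `w(G) = Σ_T w(T)`, summed over all spanning trees. -/
noncomputable def wG : ℝ := ∑ T : Finset G.E, if G.IsSpanningTree T then G.wt T else 0

open scoped Classical in
/-- The Foster coefficient `F(e) = (1/w(G)) Σ_{T : e ∉ T} w(T)`. -/
noncomputable def foster (e : G.E) : ℝ :=
  (1 / G.wG) * ∑ T : Finset G.E, if G.IsSpanningTree T ∧ e ∉ T then G.wt T else 0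

open scoped Classical in
/-- The fundamental cycle `α_{T,e}`: the unique 1-cycle supported on `T ∪ {e}` taking
the value `1` on `e`; by convention it is `0` when no such cycle exists
(e.g. when `e ∈ T`). -/
noncomputable def fundCycle (T : Finset G.E) (e : G.E) : G.E → ℝ :=
  if h : ∃ α : G.E → ℝ, G.IsCycle α ∧ α e = 1 ∧ ∀ f, f ∉ T → f ≠ e → α f = 0
  then h.choose else 0

end WGraph

namespace WGraph

/-- A circuit in `G`: a closed walk `x 0, ed 0, x 1, …, ed (n-1), x n = x 0` with
`n ≥ 1`, pairwise distinct edges and pairwise distinct vertices (except for the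
coincidence `x 0 = x n`), each edge joining consecutive vertices in one of the two
possible directions. -/
def IsCircuit (G : WGraph) {n : ℕ} (x : Fin (n + 1) → G.V) (ed : Fin n → G.E) : Prop :=
  0 < n ∧ Function.Injective ed ∧ x 0 = x (Fin.last n) ∧
  (∀ i j : Fin (n + 1), x i = x j →
    i = j ∨ (i = 0 ∧ j = Fin.last n) ∨ (i = Fin.last n ∧ j = 0)) ∧
  ∀ i : Fin n, (G.tail (ed i) = x i.castSucc ∧ G.head (ed i) = x i.succ) ∨
    (G.tail (ed i) = x i.succ ∧ G.head (ed i) = x i.castSucc)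

end WGraph

namespace WGraph

/-- Two edges lie on a common circuit of `G`. -/
def OnCommonCircuit (G : WGraph) (e f : G.E) : Prop :=
  ∃ (n : ℕ) (x : Fin (n + 1) → G.V) (ed : Fin n → G.E),
    G.IsCircuit x ed ∧ (∃ i, ed i = e) ∧ ∃ i, ed i = f

end WGraph

theorem Fin.sum_univ_succ_sub_castSucc {M : Type*} [AddCommGroup M] :
    ∀ {n : ℕ} (f : Fin (n + 1) → M),
      ∑ i : Fin n, (f i.succ - f i.castSucc) = f (Fin.last n) - f 0
  | 0, f => by simp
  | n + 1, f => by
    have ih := Fin.sum_univ_succ_sub_castSucc (f ∘ Fin.castSucc)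
    simp only [Function.comp_apply, Fin.castSucc_zero] at ih
    rw [Fin.sum_univ_castSucc]
    simp only [Fin.succ_castSucc]
    rw [ih, Fin.succ_last]
    abel

namespace WGraph

variable {G : WGraph}

def Joins (e : G.E) (a b : G.V) : Prop :=
  (G.tail e = a ∧ G.head e = b) ∨ (G.tail e = b ∧ G.head e = a)

lemma Joins.eq_and_eq_or_eq_and_eq {e : G.E} {a b c d : G.V} (h₁ : G.Joins e a b)
    (h₂ : G.Joins e c d) : (a = c ∧ b = d) ∨ (a = d ∧ b = c) := by
  unfold Joins at h₁ h₂
  grind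

instance : Std.Symm G.Adj := ⟨fun _ _ ⟨e, h⟩ => ⟨e, h.symm⟩⟩

variable (G) in
def toSimpleGraph : SimpleGraph G.V :=
  SimpleGraph.fromRel fun a b => ∃ e, G.tail e = a ∧ G.head e = b

lemma Connected.toSimpleGraph_reachable (hG : G.Connected) (x y : G.V) : G.toSimpleGraph.Reachable x y := by
  induction hG x y with
  | refl => rfl
  | @tail c w _ hcw ih =>
    refine ih.trans ?_
    by_cases hne : c = w
    · rw [hne]
    · obtain ⟨e, he | he⟩ := hcw
      · exact SimpleGraph.Adj.reachable ⟨hne, Or.inl ⟨e, he⟩⟩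
      · exact SimpleGraph.Adj.reachable ⟨hne, Or.inr ⟨e, he⟩⟩

lemma exists_joins_of_adj {a b : G.V} (h : G.toSimpleGraph.Adj a b) : ∃ e, G.Joins e a b := by
  obtain ⟨-, ⟨e, he⟩ | ⟨e, he⟩⟩ := h
  exacts [⟨e, Or.inl he⟩, ⟨e, Or.inr he⟩]

lemma exists_isCircuit_of_not_isBridge {e₀ : G.E} (h : ¬ G.IsBridge e₀) :
    ∃ (n : ℕ) (X : Fin (n + 1) → G.V) (ED : Fin n → G.E),
      G.IsCircuit X ED ∧ ∃ k, ED k = e₀ := by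
  obtain ⟨p, hp⟩ : (G.delEdge e₀).toSimpleGraph.Path (G.head e₀) (G.tail e₀) :=
    (Connected.toSimpleGraph_reachable (not_not.mp h) _ _).some.toPath
  choose edge hedge using @exists_joins_of_adj (G.delEdge e₀)
  let v : Fin (p.length + 1) → G.V := fun i => p.getVert i
  let ed : Fin p.length → G.E := fun i => (edge (p.adj_getVert_succ i.isLt)).1
  have hed (i : Fin p.length) : G.Joins (ed i) (v i.castSucc) (v i.succ) :=
    hedge (p.adj_getVert_succ i.isLt)
  have hv : Function.Injective v := fun i j hij =>
    Fin.ext (hp.getVert_injOn (Nat.le_of_lt_succ i.isLt) (Nat.le_of_lt_succ j.isLt) hij)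
  have hv_last : v (Fin.last _) = G.tail e₀ := p.getVert_length
  -- the circuit runs along `e₀` from its tail to its head, then back along `p`
  refine ⟨p.length + 1, Fin.cons (G.tail e₀) v, Fin.cons e₀ ed,
    ⟨p.length.succ_pos, ?_, ?_, ?_, ?_⟩, 0, rfl⟩
  · refine Fin.cons_injective_iff.mpr ⟨fun ⟨i, hi⟩ => (edge _).2 hi, fun i j hij => ?_⟩
    rcases (hed i).eq_and_eq_or_eq_and_eq (hij ▸ hed j) with ⟨h₁, -⟩ | ⟨h₁, h₂⟩
    · exact Fin.castSucc_injective _ (hv h₁)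
    · have := congrArg Fin.val (hv h₁)
      have := congrArg Fin.val (hv h₂)
      simp only [Fin.val_castSucc, Fin.val_succ] at *
      omega
  · rw [← Fin.succ_last, Fin.cons_succ, hv_last, Fin.cons_zero]
  · intro i j hij
    cases i using Fin.cases <;> cases j using Fin.cases
    · exact Or.inl rfl
    · refine Or.inr (Or.inl ⟨rfl, ?_⟩)
      rw [← Fin.succ_last, hv (hv_last.trans hij)]
    · refine Or.inr (Or.inr ⟨?_, rfl⟩)
      rw [← Fin.succ_last, hv (hv_last.trans hij.symm)]
    · simp only [Fin.cons_succ] at hij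
      exact Or.inl (congrArg Fin.succ (hv hij))
  · intro i
    cases i using Fin.cases
    · exact Or.inl ⟨rfl, p.getVert_zero.symm⟩
    · simp only [Fin.cons_succ, ← Fin.succ_castSucc]
      exact hed _

lemma IsCircuit.exists_signed_sum_sub_eq_zero {n : ℕ} {X : Fin (n + 1) → G.V} {ED : Fin n → G.E}
    (hc : G.IsCircuit X ED) (f : G.V → ℝ) :
    ∃ s : Fin n → ℤ, (∀ k, s k ≠ 0) ∧
      ∑ k, (s k : ℝ) * (f (G.head (ED k)) - f (G.tail (ED k))) = 0 := by
  have hstep (k : Fin n) : ∃ s : ℤ, s ≠ 0 ∧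
      (s : ℝ) * (f (G.head (ED k)) - f (G.tail (ED k))) = f (X k.succ) - f (X k.castSucc) := by
    rcases hc.2.2.2.2 k with ⟨ht, hh⟩ | ⟨ht, hh⟩
    · exact ⟨1, one_ne_zero, by rw [ht, hh]; ring⟩
    · exact ⟨-1, by norm_num, by rw [ht, hh]; push_cast; ring⟩
  choose s hs hsf using hstep
  refine ⟨s, hs, ?_⟩
  calc ∑ k, (s k : ℝ) * (f (G.head (ED k)) - f (G.tail (ED k)))
      = ∑ k : Fin n, (f (X k.succ) - f (X k.castSucc)) := Finset.sum_congr rfl fun k _ => hsf k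
    _ = f (X (Fin.last n)) - f (X 0) := Fin.sum_univ_succ_sub_castSucc (f ∘ X)
    _ = 0 := by rw [hc.2.2.1, sub_self]

lemma IsExactZ.eq_zero_of_not_isBridge {α : G.E → ℤ} (hα : G.IsExactZ α) {e₀ : G.E}
    (hind : LinearIndependent ℚ
      fun f : {f : G.E // f = e₀ ∨ G.OnCommonCircuit e₀ f} => G.len f.1)
    (hb : ¬ G.IsBridge e₀) : α e₀ = 0 := by
  obtain ⟨f, hf⟩ := hα
  obtain ⟨n, X, ED, hc, k₀, rfl⟩ := exists_isCircuit_of_not_isBridge hb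
  obtain ⟨s, hs, hsum⟩ := hc.exists_signed_sum_sub_eq_zero f
  have hli : LinearIndependent ℚ fun k => G.len (ED k) :=
    hind.comp (fun k => ⟨ED k, Or.inr ⟨n, X, ED, hc, ⟨k₀, rfl⟩, k, rfl⟩⟩)
      fun k l h => hc.2.1 (congrArg Subtype.val h)
  have hrel : ∑ k, ((s k * α (ED k) : ℤ) : ℚ) • G.len (ED k) = 0 := by
    rw [← hsum]
    refine Finset.sum_congr rfl fun k _ => ?_
    rw [Rat.smul_def]
    push_cast
    rw [hf, WGraph.d]
    field_simp [(G.len_pos (ED k)).ne']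
  simpa [hs k₀] using Fintype.linearIndependent_iff.mp hli _ hrel k₀

variable (G) in
def headSide (e₀ : G.E) (v : G.V) : Prop :=
  Relation.ReflTransGen (G.delEdge e₀).Adj (G.head e₀) v

lemma headSide_tail_iff {e₀ e : G.E} (he : e ≠ e₀) :
    G.headSide e₀ (G.tail e) ↔ G.headSide e₀ (G.head e) :=
  ⟨fun h => h.tail ⟨⟨e, he⟩, Or.inl ⟨rfl, rfl⟩⟩, fun h => h.tail ⟨⟨e, he⟩, Or.inr ⟨rfl, rfl⟩⟩⟩

lemma not_headSide_tail (hG : G.Connected) {b : G.E} (hb : G.IsBridge b) :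
    ¬ G.headSide b (G.tail b) := by
  intro htail
  have hall (v : G.V) : G.headSide b v := by
    induction hG (G.head b) v with
    | refl => exact .refl
    | @tail c w _ hcw ih =>
      obtain ⟨e, hj⟩ := hcw
      by_cases he : e = b
      · subst he
        rcases hj with ⟨-, rfl⟩ | ⟨rfl, -⟩
        exacts [.refl, htail]
      · exact ih.tail ⟨⟨e, he⟩, hj⟩
  exact hb fun x y => (symm (hall x)).trans (hall y)

open scoped Classical in
lemma ite_headSide_head_sub_tail {R : Type*} [Ring R] (hG : G.Connected) {b : G.E}
    (hb : G.IsBridge b) (e : G.E) :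
    ((if G.headSide b (G.head e) then 1 else 0 : R) - if G.headSide b (G.tail e) then 1 else 0) =
      if e = b then 1 else 0 := by
  by_cases he : e = b
  · rw [he, if_pos .refl, if_neg (not_headSide_tail hG hb), if_pos rfl, sub_zero]
  · simp [headSide_tail_iff he, he]

lemma sum_mul_dStarZ (w : G.V → ℤ) (γ : G.E → ℤ) :
    ∑ x, w x * G.dStarZ γ x = ∑ e, γ e * (w (G.head e) - w (G.tail e)) := by
  have hfiber (t : G.E → G.V) :
      ∑ x, w x * ∑ e ∈ Finset.univ.filter (t · = x), γ e = ∑ e, γ e * w (t e) := by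
    simp_rw [Finset.mul_sum]
    rw [← Finset.sum_fiberwise Finset.univ t fun e => γ e * w (t e)]
    refine Finset.sum_congr rfl fun x _ => Finset.sum_congr rfl fun e he => ?_
    rw [(Finset.mem_filter.mp he).2, mul_comm]
  simp only [dStarZ, mul_sub, Finset.sum_sub_distrib, hfiber]

open scoped Classical in
noncomputable def bridgeFlux : (G.V → ℤ) →ₗ[ℤ] ({b : G.E // G.IsBridge b} → ℤ) :=
  Matrix.mulVecLin (Matrix.of fun b x => if G.headSide b.1 x then 1 else 0)

lemma bridgeFlux_dStarZ (hG : G.Connected) (γ : G.E → ℤ) :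
    G.bridgeFlux (G.dStarZ γ) = fun b => γ b.1 := by
  funext b
  simp only [bridgeFlux, Matrix.mulVecLin_apply, Matrix.mulVec, dotProduct, Matrix.of_apply]
  rw [sum_mul_dStarZ]
  simp only [ite_headSide_head_sub_tail hG b.2, mul_ite, mul_one, mul_zero]
  simp

lemma IsCycleZ.eq_zero_of_isBridge (hG : G.Connected) {γ : G.E → ℤ} (hγ : G.IsCycleZ γ)
    {b : G.E} (hb : G.IsBridge b) : γ b = 0 := by
  have h := congrFun (bridgeFlux_dStarZ hG γ) ⟨b, hb⟩
  rw [show G.dStarZ γ = 0 from funext hγ, map_zero] at h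
  exact h.symm

open scoped Classical in
lemma isExactZ_of_forall_not_isBridge (hG : G.Connected) {α : G.E → ℤ}
    (hα : ∀ e, ¬ G.IsBridge e → α e = 0) : G.IsExactZ α := by
  refine ⟨fun v => ∑ b : {b : G.E // G.IsBridge b},
    (α b * G.len b : ℝ) * if G.headSide b.1 v then 1 else 0, fun e => ?_⟩
  rw [WGraph.d, ← Finset.sum_sub_distrib, eq_div_iff (G.len_pos e).ne']
  simp only [← mul_sub, ite_headSide_head_sub_tail hG (Subtype.prop _)]
  by_cases he : G.IsBridge e
  · rw [Fintype.sum_eq_single ⟨e, he⟩ fun b hb => by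
      simp [Ne.symm (Subtype.coe_ne_coe.mpr hb)]]
    simp
  · simp [hα e he, fun b : {b // G.IsBridge b} => show e ≠ b.1 from fun h => he (h ▸ b.2)]

lemma dStarZ_single (e : G.E) :
    G.dStarZ (Pi.single e 1) = Pi.single (G.head e) 1 - Pi.single (G.tail e) 1 := by
  funext x
  simp [dStarZ, Pi.single_apply, eq_comm]

lemma exists_dStarZ_eq (hG : G.Connected) {D : G.V → ℤ} (hD : ∑ x, D x = 0) :
    ∃ γ, G.dStarZ γ = D := by
  suffices D ∈ G.dStarZHom.range from this
  have hpair {x y : G.V} (h : Relation.ReflTransGen G.Adj x y) :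
      Pi.single y 1 - Pi.single x 1 ∈ G.dStarZHom.range := by
    induction h with
    | refl => simp
    | @tail c w _ hcw ih =>
      obtain ⟨e, ⟨rfl, rfl⟩ | ⟨rfl, rfl⟩⟩ := hcw
      · convert add_mem ih ⟨Pi.single e 1, dStarZ_single e⟩ using 1
        abel
      · convert sub_mem ih ⟨Pi.single e 1, dStarZ_single e⟩ using 1
        abel
  rcases isEmpty_or_nonempty G.V with hV | ⟨⟨z⟩⟩
  · exact ⟨0, Subsingleton.elim _ _⟩
  · have hD' : D = ∑ x, D x • (Pi.single x 1 - Pi.single z 1) := by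
      simp only [smul_sub, Finset.sum_sub_distrib, ← Finset.sum_smul, hD, zero_smul, sub_zero]
      exact pi_eq_sum_univ' D
    rw [hD']
    exact sum_mem fun x _ => zsmul_mem (hpair (hG z x)) _

open scoped Classical in
variable (G) in
noncomputable def offBridges : (G.E → ℤ) →+ (G.E → ℤ) where
  toFun α e := if G.IsBridge e then 0 else α e
  map_zero' := by ext; simp
  map_add' α β := by ext e; split_ifs <;> simp [*]

open scoped Classical in
lemma offBridges_apply (α : G.E → ℤ) (e : G.E) :
    G.offBridges α e = if G.IsBridge e then 0 else α e := rfl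

lemma mem_ker_offBridges {α : G.E → ℤ} :
    α ∈ G.offBridges.ker ↔ ∀ e, ¬ G.IsBridge e → α e = 0 := by
  simp only [AddMonoidHom.mem_ker, funext_iff, offBridges_apply, Pi.zero_apply]
  exact forall_congr' fun e => by by_cases he : G.IsBridge e <;> simp [he]

lemma offBridges_eq_self {α : G.E → ℤ} (hα : ∀ b, G.IsBridge b → α b = 0) :
    G.offBridges α = α := by
  funext e
  by_cases he : G.IsBridge e <;> simp [offBridges_apply, he, hα]

lemma jacRel_eq_ker_sup_ker (hG : G.Connected)
    (hind : ∀ e : G.E, LinearIndependent ℚ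
      fun f : {f : G.E // f = e ∨ G.OnCommonCircuit e f} => G.len f.1) :
    G.jacRel = G.dStarZHom.ker ⊔ G.offBridges.ker := by
  have hset : {α | G.IsCycleZ α ∨ G.IsExactZ α} =
      (G.dStarZHom.ker : Set (G.E → ℤ)) ∪ G.offBridges.ker := by
    ext α
    simp only [Set.mem_ofPred_eq, Set.mem_union, SetLike.mem_coe, mem_ker_offBridges]
    refine or_congr ⟨fun h => AddMonoidHom.mem_ker.mpr (funext h),
      fun h => congrFun (AddMonoidHom.mem_ker.mp h)⟩
      ⟨fun h e he => h.eq_zero_of_not_isBridge (hind e) he, isExactZ_of_forall_not_isBridge hG⟩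
  rw [jacRel, hset, AddSubgroup.closure_union, AddSubgroup.closure_eq, AddSubgroup.closure_eq]

lemma ker_dStarZHom_comp_offBridges (hG : G.Connected) :
    (G.dStarZHom.comp G.offBridges).ker = G.dStarZHom.ker ⊔ G.offBridges.ker := by
  refine le_antisymm (fun α hα => ?_) (sup_le (fun γ hγ => ?_) fun α hα => ?_)
  · rw [← add_sub_cancel (G.offBridges α) α]
    refine add_mem (AddSubgroup.mem_sup_left hα) (AddSubgroup.mem_sup_right ?_)
    exact mem_ker_offBridges.mpr fun e he => by simp [offBridges_apply, he]
  · have hcycle : G.IsCycleZ γ := congrFun (AddMonoidHom.mem_ker.mp hγ)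
    rwa [AddMonoidHom.mem_ker, AddMonoidHom.comp_apply,
      offBridges_eq_self fun b hb => hcycle.eq_zero_of_isBridge hG hb]
  · rw [AddMonoidHom.mem_ker, AddMonoidHom.comp_apply, AddMonoidHom.mem_ker.mp hα, map_zero]

variable (G) in
noncomputable def fluxDeg : (G.V → ℤ) →ₗ[ℤ] ({b : G.E // G.IsBridge b} → ℤ) × ℤ :=
  G.bridgeFlux.prod (Fintype.linearCombination ℤ fun _ => 1)

lemma fluxDeg_apply (D : G.V → ℤ) : G.fluxDeg D = (G.bridgeFlux D, ∑ x, D x) := by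
  simp [fluxDeg, Fintype.linearCombination_apply]

lemma range_dStarZHom_comp_offBridges (hG : G.Connected) :
    (G.dStarZHom.comp G.offBridges).range = (LinearMap.ker G.fluxDeg).toAddSubgroup := by
  ext D
  simp only [AddMonoidHom.mem_range, Submodule.mem_toAddSubgroup, LinearMap.mem_ker,
    fluxDeg_apply, Prod.mk_eq_zero, AddMonoidHom.comp_apply]
  constructor
  · rintro ⟨α, rfl⟩
    refine ⟨?_, G.sum_dStarZ _⟩
    change G.bridgeFlux (G.dStarZ (G.offBridges α)) = 0
    rw [bridgeFlux_dStarZ hG]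
    funext b
    simp [offBridges_apply, b.2]
  · rintro ⟨hflux, hdeg⟩
    obtain ⟨γ, rfl⟩ := exists_dStarZ_eq hG hdeg
    rw [bridgeFlux_dStarZ hG] at hflux
    exact ⟨γ, by rw [offBridges_eq_self fun b hb => congrFun hflux ⟨b, hb⟩]; rfl⟩

lemma fluxDeg_surjective (hG : G.Connected) [Nonempty G.V] : Function.Surjective G.fluxDeg := by
  classical
  obtain ⟨z⟩ := ‹Nonempty G.V›
  let extend (β : {b : G.E // G.IsBridge b} → ℤ) (e : G.E) : ℤ :=
    if h : G.IsBridge e then β ⟨e, h⟩ else 0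
  have hflux β : G.bridgeFlux (G.dStarZ (extend β)) = β := by
    rw [bridgeFlux_dStarZ hG]
    funext b
    simp [extend, b.2]
  rintro ⟨β, n⟩
  -- `δ_z` has degree one; subtracting a bridge chain's boundary removes its flux
  refine ⟨G.dStarZ (extend β) +
    n • (Pi.single z 1 - G.dStarZ (extend (G.bridgeFlux (Pi.single z 1)))), ?_⟩
  rw [fluxDeg_apply, map_add, map_zsmul, map_sub, hflux, hflux, sub_self, smul_zero, add_zero]
  simp [Finset.sum_add_distrib, Finset.sum_sub_distrib, ← Finset.mul_sum, sum_dStarZ]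

lemma finrank_ker_fluxDeg (hG : G.Connected) :
    Module.finrank ℤ (LinearMap.ker G.fluxDeg) =
      Fintype.card G.V - Nat.card {b : G.E // G.IsBridge b} - 1 := by
  classical
  rcases isEmpty_or_nonempty G.V with hV | hV
  · rw [Fintype.card_eq_zero, Nat.zero_sub, Nat.zero_sub]
    exact Module.finrank_zero_of_subsingleton
  · have h := (LinearMap.ker G.fluxDeg).finrank_quotient_add_finrank
    rw [(G.fluxDeg.quotKerEquivOfSurjective (fluxDeg_surjective hG)).finrank_eq,
      Module.finrank_prod, Module.finrank_fintype_fun_eq_card, Module.finrank_self,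
      Module.finrank_fintype_fun_eq_card] at h
    rw [Nat.card_eq_fintype_card]
    omega

end WGraph

/-- If the edge lengths within each maximal 2-connected component
of `G` (the equivalence class of an edge under lying on a common circuit) are
`ℚ`-linearly independent, then `J(G)` is free abelian of rank
`#V(G) - #Br(G) - 1`, where `Br(G)` is the set of bridges. -/
theorem jacobian_free_of_independent_lengths (G : WGraph) (hG : G.Connected)
    (hind : ∀ e : G.E, LinearIndependent ℚ
      fun f : {f : G.E // f = e ∨ WGraph.OnCommonCircuit G e f} => G.len f.1) :
    Nonempty (G.Jac ≃+
      (Fin (Fintype.card G.V - Nat.card {e : G.E // G.IsBridge e} - 1) → ℤ)) := by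
  have hJ : G.Jac ≃+ LinearMap.ker G.fluxDeg :=
    (QuotientAddGroup.quotientAddEquivOfEq ((WGraph.jacRel_eq_ker_sup_ker hG hind).trans
      (WGraph.ker_dStarZHom_comp_offBridges hG).symm)).trans <|
    (QuotientAddGroup.quotientKerEquivRange _).trans
      (AddEquiv.addSubgroupCongr (WGraph.range_dStarZHom_comp_offBridges hG))
  rw [← WGraph.finrank_ker_fluxDeg hG]
  exact ⟨hJ.trans (Module.finBasis ℤ _).equivFun.toAddEquiv⟩
end

section
/- Let G be a finite connected 2-connected weighted graph (with no bridges and no loops) whose edge lengths are ℚ-linearly independent. Then Prin(G) = 0; that is, any function f: V(G) → ℝ with integer slopes along every edge is constant. -/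
/-- If `G` is connected, 2-connected (no loops and no bridges),
and has `ℚ`-linearly independent edge lengths, then every function on the vertices
with integer slopes along all edges is constant, i.e. `Prin(G) = 0`. -/
theorem prin_trivial_of_independent_lengths (G : WGraph) (hG : G.Connected)
    (hloop : ∀ e, G.tail e ≠ G.head e) (hbridge : ∀ e, ¬ G.IsBridge e)
    (hind : LinearIndependent ℚ G.len) :
    ∀ f : G.V → ℝ, (∀ e, ∃ m : ℤ, f (G.head e) - f (G.tail e) = m * G.len e) →
      ∀ x y, f x = f y := by
  intro f hf
  choose m hm using hf
  have hall : ∀ e₀, m e₀ = 0 := by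
    intro e₀
    have hconn : (G.delEdge e₀).Connected := not_not.mp (hbridge e₀)
    have key : ∀ x y : (G.delEdge e₀).V, Relation.ReflTransGen (G.delEdge e₀).Adj x y →
        ∃ c : G.E → ℤ, c e₀ = 0 ∧ f y - f x = ∑ e, (c e : ℝ) * G.len e := by
      intro x y h
      induction h with
      | refl => exact ⟨0, rfl, by simp⟩
      | @tail b z hxy hyz ih =>
        obtain ⟨c, hc0, hcs⟩ := ih
        obtain ⟨e, he⟩ := hyz
        rcases he with ⟨ht, hh⟩ | ⟨ht, hh⟩
        · refine ⟨c + fun e' => if e' = e.1 then m e.1 else 0, ?_, ?_⟩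
          · simp only [Pi.add_apply, hc0]
            rw [if_neg (fun h => e.2 h.symm)]
            simp
          · have ht' : G.tail e.1 = b := ht
            have hh' : G.head e.1 = z := hh
            have hd : f z - f b = (m e.1 : ℝ) * G.len e.1 := by
              rw [← ht', ← hh']; exact hm e.1
            simp only [Pi.add_apply, Int.cast_add, Int.cast_ite, Int.cast_zero, add_mul,
              Finset.sum_add_distrib, ite_mul, zero_mul, Finset.sum_ite_eq',
              Finset.mem_univ, if_true]
            linarith [hcs, hd]
        · refine ⟨c + fun e' => if e' = e.1 then -(m e.1) else 0, ?_, ?_⟩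
          · simp only [Pi.add_apply, hc0]
            rw [if_neg (fun h => e.2 h.symm)]
            simp
          · have ht' : G.tail e.1 = z := ht
            have hh' : G.head e.1 = b := hh
            have hd : f b - f z = (m e.1 : ℝ) * G.len e.1 := by
              rw [← ht', ← hh']; exact hm e.1
            simp only [Pi.add_apply, Int.cast_add, Int.cast_ite, Int.cast_zero,
              Int.cast_neg, add_mul, Finset.sum_add_distrib, ite_mul, zero_mul,
              neg_mul, Finset.sum_ite_eq', Finset.mem_univ, if_true]
            linarith [hcs, hd]
    obtain ⟨c, hc0, hcs⟩ := key (G.tail e₀) (G.head e₀) (hconn _ _)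
    have heq : (m e₀ : ℝ) * G.len e₀ = ∑ e, (c e : ℝ) * G.len e := by
      rw [← hcs]; exact (hm e₀).symm
    set g : G.E → ℚ := fun e => (c e : ℚ) - if e = e₀ then (m e₀ : ℚ) else 0 with hgdef
    have hg : ∑ e, g e • G.len e = 0 := by
      have : ∀ e, g e • G.len e = (c e : ℝ) * G.len e -
          (if e = e₀ then (m e₀ : ℝ) * G.len e else 0) := by
        intro e
        simp only [hgdef, Rat.smul_def]
        push_cast
        by_cases h : e = e₀ <;> simp [h] <;> ring
      rw [Finset.sum_congr rfl (fun e _ => this e), Finset.sum_sub_distrib,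
        Finset.sum_ite_eq' Finset.univ e₀ (fun e => (m e₀ : ℝ) * G.len e)]
      simp [heq]
    have hz := Fintype.linearIndependent_iff.mp hind g hg e₀
    simp only [hgdef, hc0, Int.cast_zero, if_pos rfl, zero_sub, neg_eq_zero] at hz
    exact_mod_cast hz
  have hAdj : ∀ x y, G.Adj x y → f x = f y := by
    rintro x y ⟨e, ⟨ht, hh⟩ | ⟨ht, hh⟩⟩ <;>
      · have h := hm e; rw [hall e] at h; push_cast at h
        rw [← ht, ← hh]; linarith
  intro x y
  induction hG x y with
  | refl => rfl
  | tail _ h ih => exact ih.trans (hAdj _ _ h)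
end

section
/- Let G be a finite connected weighted graph and e an edge of G. The integration functional ∫_e ∈ Ω(G)* is zero if and only if e is a bridge, i.e., if and only if the graph G − e obtained by deleting e is disconnected. -/
/-! If `G - e` is connected, a path in `G - e` from the head of `e` back to its tail closes up
with `e` into a 1-cycle, i.e. a harmonic form, whose coefficient on `e` is `1`. If `e` is a bridge,
let `A` be the component of the tail of `e` in `G - e` and sum the harmonicity condition of `ω`
over `A`: every edge other than `e` has both or neither endpoint in `A` and cancels out,
leaving `ω_e = 0`. -/

namespace WGraph

open Finset

variable {G : WGraph}

lemma Adj.symm {x y : G.V} (h : G.Adj x y) : G.Adj y x :=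
  let ⟨f, hf⟩ := h; ⟨f, hf.symm⟩

lemma harmonic_iff_isCycle (ω : G.E → ℝ) : G.Harmonic ω ↔ G.IsCycle ω :=
  forall_congr' fun _ => sub_eq_zero.symm

lemma dStar_add (α β : G.E → ℝ) : G.dStar (α + β) = G.dStar α + G.dStar β := by
  funext x
  simp only [dStar, Pi.add_apply, sum_add_distrib]
  ring

lemma dStar_single (f : G.E) (c : ℝ) :
    G.dStar (Pi.single f c) = Pi.single (G.head f) c - Pi.single (G.tail f) c := by
  funext x
  simp only [dStar, Pi.sub_apply, Pi.single_apply, sum_ite_eq', mem_filter, mem_univ, true_and]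
  congr 1 <;> exact if_congr eq_comm rfl rfl

lemma sum_dStar (α : G.E → ℝ) (A : Finset G.V) :
    ∑ x ∈ A, G.dStar α x =
      ∑ f, ((if G.head f ∈ A then α f else 0) - if G.tail f ∈ A then α f else 0) := by
  have fiberwise (v : G.E → G.V) :
      ∑ x ∈ A, ∑ f ∈ univ.filter (fun f => v f = x), α f = ∑ f, if v f ∈ A then α f else 0 := by
    simp only [sum_filter]
    rw [sum_comm]
    exact sum_congr rfl fun f _ => sum_ite_eq _ _ _
  simp only [dStar, sum_sub_distrib, fiberwise]

lemma IsCycle.apply_eq_zero_of_cut {ω : G.E → ℝ} (hω : G.IsCycle ω) {e : G.E}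
    {A : Finset G.V} (htail : G.tail e ∈ A) (hhead : G.head e ∉ A)
    (hcut : ∀ f, f ≠ e → (G.head f ∈ A ↔ G.tail f ∈ A)) : ω e = 0 := by
  have hflux := sum_dStar ω A
  rw [sum_eq_zero fun x _ => hω x, sum_eq_single e] at hflux
  · simpa [htail, hhead] using hflux
  · intro f _ hfe
    by_cases hf : G.tail f ∈ A
    · simp [hf, (hcut f hfe).mpr hf]
    · simp [hf, mt (hcut f hfe).mp hf]
  · simp

lemma exists_chain_of_reflTransGen_delEdge {e : G.E} {a b : G.V}
    (h : Relation.ReflTransGen (G.delEdge e).Adj a b) :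
    ∃ α : G.E → ℝ, α e = 0 ∧ G.dStar α = Pi.single b 1 - Pi.single a 1 := by
  induction h with
  | refl => exact ⟨0, rfl, funext fun x => by simp [dStar]⟩
  | tail _ hstep ih =>
    obtain ⟨α, hαe, hα⟩ := ih
    obtain ⟨⟨f, hfe⟩, hf⟩ := hstep
    have hef : e ≠ f := Ne.symm hfe
    rcases hf with ⟨rfl, rfl⟩ | ⟨rfl, rfl⟩
    · refine ⟨α + Pi.single f 1, by simp [hαe, hef], ?_⟩
      rw [dStar_add, hα, dStar_single]
      simp only [delEdge]
      abel
    · refine ⟨α + Pi.single f (-1), by simp [hαe, hef], ?_⟩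
      rw [dStar_add, hα, dStar_single, Pi.single_neg, Pi.single_neg]
      simp only [delEdge]
      abel

lemma exists_isCycle_apply_eq_one {e : G.E} (he : ¬ G.IsBridge e) :
    ∃ ω : G.E → ℝ, G.IsCycle ω ∧ ω e = 1 := by
  rw [IsBridge, not_not] at he
  obtain ⟨α, hαe, hα⟩ := exists_chain_of_reflTransGen_delEdge (he (G.head e) (G.tail e))
  refine ⟨α + Pi.single e 1, fun x => ?_, by simp [hαe]⟩
  rw [dStar_add, hα, dStar_single]
  simp

/-- Once its endpoints are joined in `G - e`, the edge `e` can be bypassed by that walk. -/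
lemma connected_delEdge (hG : G.Connected) {e : G.E}
    (h : Relation.ReflTransGen (G.delEdge e).Adj (G.tail e) (G.head e)) :
    (G.delEdge e).Connected := by
  have hadj : ∀ u v, G.Adj u v → Relation.ReflTransGen (G.delEdge e).Adj u v := by
    rintro u v ⟨f, hf⟩
    by_cases hfe : f = e
    · subst hfe
      rcases hf with ⟨rfl, rfl⟩ | ⟨rfl, rfl⟩
      · exact h
      · exact Relation.reflTransGen_swap.mp
          (Relation.ReflTransGen.mono (fun _ _ => Adj.symm) _ _ h)
    · exact .single ⟨⟨f, hfe⟩, hf⟩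
  exact fun x y => Relation.reflTransGen_closed hadj _ _ (hG x y)

lemma IsCycle.apply_eq_zero_of_isBridge (hG : G.Connected) {e : G.E} (hb : G.IsBridge e)
    {ω : G.E → ℝ} (hω : G.IsCycle ω) : ω e = 0 := by
  classical
  let A : Finset G.V := univ.filter (Relation.ReflTransGen (G.delEdge e).Adj (G.tail e))
  refine hω.apply_eq_zero_of_cut (A := A) ?_ ?_ fun f hfe => ?_
  · exact mem_filter.mpr ⟨mem_univ _, .refl⟩
  · exact fun hmem => hb (connected_delEdge hG (mem_filter.mp hmem).2)
  · have hstep : (G.delEdge e).Adj (G.tail f) (G.head f) := ⟨⟨f, hfe⟩, .inl ⟨rfl, rfl⟩⟩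
    simp only [A, mem_filter, mem_univ, true_and]
    exact ⟨fun h => h.tail hstep.symm, fun h => h.tail hstep⟩

end WGraph

/-- The integration functional `∫_e ω = ω_e ℓ(e)` on harmonic
1-forms is identically zero if and only if `e` is a bridge (deleting `e`
disconnects `G`). -/
theorem int_edge_zero_iff_bridge (G : WGraph) (hG : G.Connected) (e : G.E) :
    (∀ ω : G.E → ℝ, G.Harmonic ω → ω e * G.len e = 0) ↔ G.IsBridge e := by
  simp only [WGraph.harmonic_iff_isCycle]
  constructor
  · intro h
    by_contra hb
    obtain ⟨ω, hω, hωe⟩ := WGraph.exists_isCycle_apply_eq_one hb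
    exact (G.len_pos e).ne' (by simpa [hωe] using h ω hω)
  · intro hb ω hω
    rw [hω.apply_eq_zero_of_isBridge hG hb, zero_mul]
end
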